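/- Let {x_i} be a Markov chain with stationary distribution μ satisfying geometric mixing with constants κ > 0, ρ ∈ (0,1). Let h : 𝒳 → ℝ^d with ‖h(x)‖ ≤ C for all x and E_μ[h] = h̄. Then for the batch average h_B = (1/B)∑_{i=0}^{B−1} h(x_i) started from any initial state, E[‖h_B − h̄‖²] ≤ (1/B²)[4BC² + 8C²κρB/(1−ρ)] ≤ 8C²[1+(κ−1)ρ]/((1−ρ)B). -/

import Mathlib

open MeasureTheory ProbabilityTheory

/-- `k`-step transition kernel of a time-homogeneous Markov chain. -/
noncomputable def kpow {𝒳 : Type*} [MeasurableSpace 𝒳] (P : Kernel 𝒳 𝒳) : ℕ → Kernel 𝒳 𝒳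
  | 0 => Kernel.id
  | n + 1 => (kpow P n).comp P

open Finset
open scoped RealInnerProductSpace

/-!
Centre `h` at `h̄ = ∫ h ∂μ`, so that `g = h - h̄` is bounded by `2C`. Expanding the square of the
batch average gives `B⁻² ∑ᵢ ∑ⱼ E⟪g xᵢ, g xⱼ⟫`. Diagonal terms are at most `4C²`. For `i < j`,
conditioning on `xᵢ` turns `g xⱼ` into `∫ g d(P^(j-i) xᵢ)`, and by geometric mixing (through the
layer-cake formula) this integral has norm at most `2Cκρ^(j-i)`. Summing the geometric series
over the off-diagonal terms gives the first bound, and the second follows by algebra.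
-/

instance isMarkovKernel_kpow {𝒳 : Type*} [MeasurableSpace 𝒳] (P : Kernel 𝒳 𝒳)
    [IsMarkovKernel P] (k : ℕ) : IsMarkovKernel (kpow P k) := by
  induction k with
  | zero => rw [kpow]; infer_instance
  | succ n ih => rw [kpow]; infer_instance

section TotalVariation

variable {α : Type*} [MeasurableSpace α] {ν₁ ν₂ : Measure α} [IsProbabilityMeasure ν₁]
  [IsProbabilityMeasure ν₂] {ε : ℝ}

lemma integral_sub_integral_le_of_measureReal_sub_le {f : α → ℝ} {M : ℝ} (hf : Measurable f)
    (hf₀ : ∀ s, 0 ≤ f s) (hfM : ∀ s, f s ≤ M)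
    (hν : ∀ A, MeasurableSet A → |ν₁.real A - ν₂.real A| ≤ ε) :
    ∫ s, f s ∂ν₁ - ∫ s, f s ∂ν₂ ≤ M * ε := by
  have hM : 0 ≤ M := (hf₀ (nonempty_of_isProbabilityMeasure ν₁).some).trans (hfM _)
  have layerCake (ν : Measure α) [IsProbabilityMeasure ν] :
      ∫ s, f s ∂ν = ∫ t in Set.Ioc 0 M, ν.real {s | t ≤ f s} :=
    (Integrable.of_bound hf.aestronglyMeasurable M (ae_of_all _ fun s => by
      rw [Real.norm_of_nonneg (hf₀ s)]; exact hfM s)).integral_eq_integral_Ioc_meas_le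
      (ae_of_all _ hf₀) (ae_of_all _ hfM)
  have tail_integrableOn (ν : Measure α) [IsProbabilityMeasure ν] :
      IntegrableOn (fun t => ν.real {s | t ≤ f s}) (Set.Ioc 0 M) := by
    refine (AntitoneOn.integrableOn_isCompact isCompact_Icc fun a _ b _ hab => ?_).mono_set
      Set.Ioc_subset_Icc_self
    exact measureReal_mono fun s hs => hab.trans hs
  rw [layerCake ν₁, layerCake ν₂, ← integral_sub (tail_integrableOn ν₁) (tail_integrableOn ν₂)]
  calc ∫ t in Set.Ioc 0 M, (ν₁.real {s | t ≤ f s} - ν₂.real {s | t ≤ f s})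
      ≤ ∫ _ in Set.Ioc 0 M, ε :=
        setIntegral_mono_on ((tail_integrableOn ν₁).sub (tail_integrableOn ν₂))
          (integrableOn_const measure_Ioc_lt_top.ne) measurableSet_Ioc fun t _ =>
          (le_abs_self _).trans (hν _ (measurableSet_le measurable_const hf))
    _ = M * ε := by
      rw [setIntegral_const, measureReal_def, Real.volume_Ioc, ENNReal.toReal_ofReal (by linarith),
        sub_zero, smul_eq_mul]

lemma norm_integral_sub_integral_le_of_measureReal_sub_le {E : Type*} [NormedAddCommGroup E]
    [InnerProductSpace ℝ E] [CompleteSpace E] {h : α → E} {C : ℝ} (hh : StronglyMeasurable h)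
    (hC : ∀ s, ‖h s‖ ≤ C) (hν : ∀ A, MeasurableSet A → |ν₁.real A - ν₂.real A| ≤ ε) :
    ‖∫ s, h s ∂ν₁ - ∫ s, h s ∂ν₂‖ ≤ 2 * C * ε := by
  set v := ∫ s, h s ∂ν₁ - ∫ s, h s ∂ν₂
  have hε : 0 ≤ ε := by simpa using hν ∅ MeasurableSet.empty
  have hC₀ : 0 ≤ C := (norm_nonneg _).trans (hC (nonempty_of_isProbabilityMeasure ν₁).some)
  have shifted (ν : Measure α) [IsProbabilityMeasure ν] :
      ∫ s, (⟪v, h s⟫ + ‖v‖ * C) ∂ν = ⟪v, ∫ s, h s ∂ν⟫ + ‖v‖ * C := by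
    have hint : Integrable h ν := .of_bound hh.aestronglyMeasurable C (ae_of_all _ hC)
    rw [integral_add (hint.const_inner v) (integrable_const _), integral_inner hint]
    simp
  -- `⟪v, h⟫ + ‖v‖ C` takes values in `[0, 2 ‖v‖ C]`, and its integrals differ by `‖v‖²`.
  have key : ∫ s, (⟪v, h s⟫ + ‖v‖ * C) ∂ν₁ - ∫ s, (⟪v, h s⟫ + ‖v‖ * C) ∂ν₂
      ≤ 2 * ‖v‖ * C * ε := by
    have hinner (s : α) : |⟪v, h s⟫| ≤ ‖v‖ * C :=
      (abs_real_inner_le_norm _ _).trans (mul_le_mul_of_nonneg_left (hC s) (norm_nonneg v))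
    refine integral_sub_integral_le_of_measureReal_sub_le
      ((stronglyMeasurable_const.inner hh).measurable.add_const _) (fun s => ?_) (fun s => ?_) hν
    · linarith [(abs_le.mp (hinner s)).1]
    · linarith [(abs_le.mp (hinner s)).2]
  rw [shifted, shifted, add_sub_add_right_eq_sub, ← inner_sub_right,
    real_inner_self_eq_norm_sq] at key
  nlinarith [norm_nonneg v, mul_nonneg hC₀ hε]

end TotalVariation

lemma integrable_inner_of_norm_le {α E : Type*} [MeasurableSpace α] [NormedAddCommGroup E]
    [InnerProductSpace ℝ E] {μ : Measure α} [IsFiniteMeasure μ] {f g : α → E} {C C' : ℝ}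
    (hf : AEStronglyMeasurable f μ) (hg : AEStronglyMeasurable g μ) (hfC : ∀ a, ‖f a‖ ≤ C)
    (hgC : ∀ a, ‖g a‖ ≤ C') : Integrable (fun a => ⟪f a, g a⟫) μ :=
  .of_bound (hf.inner hg) (C * C') (ae_of_all _ fun a => (norm_inner_le_norm _ _).trans
    (mul_le_mul (hfC a) (hgC a) (norm_nonneg _) ((norm_nonneg _).trans (hfC a))))

section JointLaw

variable {Ω α : Type*} [MeasurableSpace Ω] [MeasurableSpace α] {Pr : Measure Ω} {X Y : Ω → α}
  {η : Kernel α α}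

lemma map_prodMk_eq_compProd [IsFiniteMeasure Pr] [IsSFiniteKernel η] (hX : Measurable X)
    (hY : Measurable Y)
    (hXY : ∀ A B, MeasurableSet A → MeasurableSet B →
      Pr {ω | X ω ∈ A ∧ Y ω ∈ B} = ∫⁻ s in A, η s B ∂(Pr.map X)) :
    Pr.map (fun ω => (X ω, Y ω)) = Pr.map X ⊗ₘ η := by
  refine Measure.ext_prod fun {A B} hA hB => ?_
  rw [Measure.map_apply (hX.prodMk hY) (hA.prod hB), Measure.compProd_apply_prod hA hB]
  exact hXY A B hA hB

variable {E : Type*} [NormedAddCommGroup E] [InnerProductSpace ℝ E] [CompleteSpace E]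

lemma integral_inner_le_of_map_prodMk_eq_compProd [IsProbabilityMeasure Pr] [IsMarkovKernel η]
    (hX : Measurable X) (hY : Measurable Y) (hlaw : Pr.map (fun ω => (X ω, Y ω)) = Pr.map X ⊗ₘ η)
    {f g : α → E} {D G δ : ℝ} (hf : StronglyMeasurable f) (hg : StronglyMeasurable g)
    (hfD : ∀ s, ‖f s‖ ≤ D) (hgG : ∀ s, ‖g s‖ ≤ G) (hδ : ∀ s, ‖∫ t, g t ∂η s‖ ≤ δ) :
    ∫ ω, ⟪f (X ω), g (Y ω)⟫ ∂Pr ≤ D * δ := by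
  have : IsProbabilityMeasure (Pr.map X) := Measure.isProbabilityMeasure_map hX.aemeasurable
  have hD : 0 ≤ D := (norm_nonneg _).trans (hfD (nonempty_of_isProbabilityMeasure (Pr.map X)).some)
  have hF : StronglyMeasurable fun p : α × α => ⟪f p.1, g p.2⟫ :=
    (hf.comp_measurable measurable_fst).inner (hg.comp_measurable measurable_snd)
  have hFint : Integrable (fun p : α × α => ⟪f p.1, g p.2⟫) (Pr.map X ⊗ₘ η) :=
    integrable_inner_of_norm_le (hf.comp_measurable measurable_fst).aestronglyMeasurable
      (hg.comp_measurable measurable_snd).aestronglyMeasurable (hfD ·.1) (hgG ·.2)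
  have hcond (s : α) : ‖⟪f s, ∫ t, g t ∂η s⟫‖ ≤ D * δ :=
    (norm_inner_le_norm _ _).trans (mul_le_mul (hfD s) (hδ s) (norm_nonneg _) hD)
  calc ∫ ω, ⟪f (X ω), g (Y ω)⟫ ∂Pr
      = ∫ s, ∫ t, ⟪f s, g t⟫ ∂η s ∂Pr.map X := by
        rw [← Measure.integral_compProd hFint, ← hlaw,
          integral_map (hX.prodMk hY).aemeasurable hF.aestronglyMeasurable]
    _ = ∫ s, ⟪f s, ∫ t, g t ∂η s⟫ ∂Pr.map X :=
        integral_congr_ae (ae_of_all _ fun s =>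
          integral_inner (.of_bound hg.aestronglyMeasurable G (ae_of_all _ hgG)) _)
    _ ≤ ∫ _, D * δ ∂Pr.map X :=
        integral_mono (.of_bound (hf.inner hg.integral_kernel).aestronglyMeasurable _
          (ae_of_all _ hcond)) (integrable_const _) fun s => (Real.le_norm_self _).trans (hcond s)
    _ = D * δ := by simp

end JointLaw

lemma sum_range_pow_sub_le {ρ : ℝ} (hρ₀ : 0 ≤ ρ) (hρ₁ : ρ < 1) (n : ℕ) :
    ∑ i ∈ range n, ρ ^ (n - i) ≤ ρ / (1 - ρ) := by
  have hreindex : ∑ i ∈ range n, ρ ^ (n - i) = ∑ i ∈ Ico 1 (n + 1), ρ ^ i := by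
    rw [sum_Ico_eq_sum_range, Nat.add_sub_cancel, ← sum_range_reflect]
    refine sum_congr rfl fun i hi => ?_
    rw [mem_range] at hi
    congr 1
    omega
  simpa [hreindex] using geom_sum_Ico_le_of_lt_one hρ₀ hρ₁ (m := 1) (n := n + 1)

lemma sum_range_sum_range_ite_pow_dist_le {a b ρ : ℝ} (hb : 0 ≤ b) (hρ₀ : 0 ≤ ρ) (hρ₁ : ρ < 1)
    (n : ℕ) :
    ∑ i ∈ range n, ∑ j ∈ range n, (if i = j then a else b * ρ ^ i.dist j) ≤
      n * (a + 2 * b * ρ / (1 - ρ)) := by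
  induction n with
  | zero => simp
  | succ n ih =>
    have hcol : ∑ i ∈ range n, (if i = n then a else b * ρ ^ i.dist n) =
        b * ∑ i ∈ range n, ρ ^ (n - i) := by
      rw [mul_sum]
      refine sum_congr rfl fun i hi => ?_
      rw [mem_range] at hi
      rw [if_neg hi.ne, Nat.dist_eq_sub_of_le hi.le]
    have hrow : ∑ j ∈ range n, (if n = j then a else b * ρ ^ n.dist j) =
        b * ∑ i ∈ range n, ρ ^ (n - i) := by
      simp_rw [eq_comm (a := n), Nat.dist_comm n]
      exact hcol
    have htail := mul_le_mul_of_nonneg_left (sum_range_pow_sub_le hρ₀ hρ₁ n) hb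
    calc ∑ i ∈ range (n + 1), ∑ j ∈ range (n + 1), (if i = j then a else b * ρ ^ i.dist j)
        = ∑ i ∈ range n, ∑ j ∈ range n, (if i = j then a else b * ρ ^ i.dist j) +
            2 * (b * ∑ i ∈ range n, ρ ^ (n - i)) + a := by
          simp only [sum_range_succ, sum_add_distrib, hcol, hrow, if_true]
          ring
      _ ≤ n * (a + 2 * b * ρ / (1 - ρ)) + 2 * (b * (ρ / (1 - ρ))) + a := by linarith
      _ = (n + 1 : ℕ) * (a + 2 * b * ρ / (1 - ρ)) := by push_cast; ring

lemma integral_norm_smul_sum_sq {Ω ι E : Type*} [MeasurableSpace Ω] [NormedAddCommGroup E]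
    [InnerProductSpace ℝ E] {Pr : Measure Ω} {Z : ι → Ω → E} (s : Finset ι) (c : ℝ)
    (hZ : ∀ i j, Integrable (fun ω => ⟪Z i ω, Z j ω⟫) Pr) :
    ∫ ω, ‖c • ∑ i ∈ s, Z i ω‖ ^ 2 ∂Pr = c ^ 2 * ∑ i ∈ s, ∑ j ∈ s, ∫ ω, ⟪Z i ω, Z j ω⟫ ∂Pr := by
  simp_rw [norm_smul, mul_pow, Real.norm_eq_abs, sq_abs, ← real_inner_self_eq_norm_sq, sum_inner,
    inner_sum]
  rw [integral_const_mul, integral_finsetSum _ fun i _ => integrable_finsetSum _ fun j _ => hZ i j]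
  simp_rw [integral_finsetSum _ fun j _ => hZ _ j]

lemma inv_smul_sum_range_sub {E : Type*} [AddCommGroup E] [Module ℝ E] {n : ℕ} (hn : n ≠ 0)
    (v : ℕ → E) (c : E) :
    (n : ℝ)⁻¹ • ∑ i ∈ range n, v i - c = (n : ℝ)⁻¹ • ∑ i ∈ range n, (v i - c) := by
  rw [sum_sub_distrib, sum_const, card_range, ← Nat.cast_smul_eq_nsmul ℝ, smul_sub, smul_smul,
    inv_mul_cancel₀ (Nat.cast_ne_zero.mpr hn), one_smul]

lemma norm_sub_integral_le {α E : Type*} [MeasurableSpace α] [NormedAddCommGroup E]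
    [NormedSpace ℝ E] {μ : Measure α} [IsProbabilityMeasure μ] {h : α → E} {C : ℝ}
    (hC : ∀ a, ‖h a‖ ≤ C) (a : α) : ‖h a - ∫ s, h s ∂μ‖ ≤ 2 * C := by
  have : ‖∫ s, h s ∂μ‖ ≤ C := by simpa using norm_integral_le_of_norm_le_const (ae_of_all μ hC)
  linarith [norm_sub_le (h a) (∫ s, h s ∂μ), hC a]

section MarkovChain

variable {𝒳 Ω E : Type*} [MeasurableSpace 𝒳] [MeasurableSpace Ω] [NormedAddCommGroup E]
  [InnerProductSpace ℝ E] [CompleteSpace E] {P : Kernel 𝒳 𝒳} [IsMarkovKernel P] {Pr : Measure Ω}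
  [IsProbabilityMeasure Pr] {x : ℕ → Ω → 𝒳}

lemma integral_inner_comp_le_of_norm_integral_kpow_le (hx : ∀ i, Measurable (x i))
    (hMarkov : ∀ (i k : ℕ) (A B : Set 𝒳), MeasurableSet A → MeasurableSet B →
      Pr {ω | x i ω ∈ A ∧ x (i + k) ω ∈ B} = ∫⁻ s in A, (kpow P k s) B ∂(Pr.map (x i)))
    {g : 𝒳 → E} {D c ρ : ℝ} (hg : StronglyMeasurable g) (hgD : ∀ s, ‖g s‖ ≤ D)
    (hdrift : ∀ s k, ‖∫ t, g t ∂kpow P k s‖ ≤ c * ρ ^ k) (i j : ℕ) :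
    ∫ ω, ⟪g (x i ω), g (x j ω)⟫ ∂Pr ≤ if i = j then D ^ 2 else D * c * ρ ^ i.dist j := by
  wlog hij : i ≤ j generalizing i j
  · simpa only [real_inner_comm, eq_comm, Nat.dist_comm] using this j i (le_of_not_ge hij)
  obtain ⟨k, rfl⟩ := Nat.exists_eq_add_of_le hij
  rcases Nat.eq_zero_or_pos k with rfl | hk
  · simp_rw [add_zero, if_true, real_inner_self_eq_norm_sq]
    calc ∫ ω, ‖g (x i ω)‖ ^ 2 ∂Pr ≤ ∫ _, D ^ 2 ∂Pr :=
          integral_mono_of_nonneg (ae_of_all _ fun _ => by positivity) (integrable_const _)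
            (ae_of_all _ fun _ => pow_le_pow_left₀ (norm_nonneg _) (hgD _) 2)
      _ = D ^ 2 := by simp
  · rw [if_neg (by omega), Nat.dist_eq_sub_of_le hij, Nat.add_sub_cancel_left, mul_assoc]
    exact integral_inner_le_of_map_prodMk_eq_compProd (hx i) (hx (i + k))
      (map_prodMk_eq_compProd (hx i) (hx (i + k)) (hMarkov i k)) hg hg hgD hgD (hdrift · k)

end MarkovChain

theorem markov_batch_average_bound_general {𝒳 : Type*} [MeasurableSpace 𝒳] {d : ℕ}
    (P : Kernel 𝒳 𝒳) [IsMarkovKernel P] (μ : Measure 𝒳) [IsProbabilityMeasure μ]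
    (κ ρ : ℝ) (hκ : 0 < κ) (hρ : ρ ∈ Set.Ioo (0 : ℝ) 1)
    (hmix : ∀ (x : 𝒳) (k : ℕ) (A : Set 𝒳), MeasurableSet A →
      |((kpow P k x) A).toReal - (μ A).toReal| ≤ κ * ρ ^ k)
    (h : 𝒳 → EuclideanSpace ℝ (Fin d)) (C : ℝ) (hmeas : Measurable h)
    (hbd : ∀ x, ‖h x‖ ≤ C)
    {Ω : Type*} [MeasurableSpace Ω] (Pr : Measure Ω) [IsProbabilityMeasure Pr]
    (x : ℕ → Ω → 𝒳) (hx : ∀ i, Measurable (x i))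
    (hMarkov : ∀ (i k : ℕ) (A B : Set 𝒳), MeasurableSet A → MeasurableSet B →
      Pr {ω | x i ω ∈ A ∧ x (i + k) ω ∈ B} =
        ∫⁻ s in A, (kpow P k s) B ∂(Pr.map (x i)))
    (B : ℕ) (hB : 0 < B) :
    (∫ ω, ‖(B : ℝ)⁻¹ • ∑ i ∈ Finset.range B, h (x i ω) - ∫ s, h s ∂μ‖ ^ 2 ∂Pr ≤
        (1 / (B : ℝ) ^ 2) * (4 * B * C ^ 2 + 8 * C ^ 2 * κ * ρ * B / (1 - ρ))) ∧
      ∫ ω, ‖(B : ℝ)⁻¹ • ∑ i ∈ Finset.range B, h (x i ω) - ∫ s, h s ∂μ‖ ^ 2 ∂Pr ≤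
        8 * C ^ 2 * (1 + (κ - 1) * ρ) / ((1 - ρ) * B) := by
  obtain ⟨hρ₀, hρ₁⟩ := hρ
  set hbar := ∫ s, h s ∂μ
  set g := fun s => h s - hbar
  have hgC : ∀ s, ‖g s‖ ≤ 2 * C := norm_sub_integral_le hbd
  have hg : StronglyMeasurable g := hmeas.stronglyMeasurable.sub stronglyMeasurable_const
  have hdrift (s : 𝒳) (k : ℕ) : ‖∫ t, g t ∂kpow P k s‖ ≤ 2 * C * κ * ρ ^ k := by
    have hint : Integrable h (kpow P k s) :=
      .of_bound hmeas.aestronglyMeasurable C (ae_of_all _ hbd)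
    rw [integral_sub hint (integrable_const _), integral_const, probReal_univ, one_smul, mul_assoc]
    exact norm_integral_sub_integral_le_of_measureReal_sub_le hmeas.stronglyMeasurable hbd
      (hmix s k)
  have hC₀ : 0 ≤ C := (norm_nonneg _).trans (hbd (nonempty_of_isProbabilityMeasure μ).some)
  have hint (i j : ℕ) : Integrable (fun ω => ⟪g (x i ω), g (x j ω)⟫) Pr :=
    integrable_inner_of_norm_le (hg.comp_measurable (hx i)).aestronglyMeasurable
      (hg.comp_measurable (hx j)).aestronglyMeasurable (hgC <| x i ·) (hgC <| x j ·)
  have hfirst : ∫ ω, ‖(B : ℝ)⁻¹ • ∑ i ∈ range B, h (x i ω) - hbar‖ ^ 2 ∂Pr ≤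
      (1 / (B : ℝ) ^ 2) * (4 * B * C ^ 2 + 8 * C ^ 2 * κ * ρ * B / (1 - ρ)) := by
    calc ∫ ω, ‖(B : ℝ)⁻¹ • ∑ i ∈ range B, h (x i ω) - hbar‖ ^ 2 ∂Pr
        = (B : ℝ)⁻¹ ^ 2 * ∑ i ∈ range B, ∑ j ∈ range B, ∫ ω, ⟪g (x i ω), g (x j ω)⟫ ∂Pr := by
          simp_rw [inv_smul_sum_range_sub hB.ne']
          exact integral_norm_smul_sum_sq _ _ hint
      _ ≤ (B : ℝ)⁻¹ ^ 2 * ∑ i ∈ range B, ∑ j ∈ range B,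
            (if i = j then (2 * C) ^ 2 else 2 * C * (2 * C * κ) * ρ ^ i.dist j) := by
          gcongr with i _ j _
          exact integral_inner_comp_le_of_norm_integral_kpow_le hx hMarkov hg hgC hdrift i j
      _ ≤ (B : ℝ)⁻¹ ^ 2 * (B * ((2 * C) ^ 2 + 2 * (2 * C * (2 * C * κ)) * ρ / (1 - ρ))) := by
          gcongr
          exact sum_range_sum_range_ite_pow_dist_le (by positivity) hρ₀.le hρ₁ B
      _ = _ := by field_simp; ring
  refine ⟨hfirst, hfirst.trans (le_of_sub_nonneg ?_)⟩
  have : 8 * C ^ 2 * (1 + (κ - 1) * ρ) / ((1 - ρ) * B) -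
      1 / (B : ℝ) ^ 2 * (4 * B * C ^ 2 + 8 * C ^ 2 * κ * ρ * B / (1 - ρ)) = 4 * C ^ 2 / B := by
    field_simp
    ring
  rw [this]
  positivity

/-- Second-moment bound for a Markovian batch average of a bounded vector-valued
function, started from an arbitrary initial state distribution. -/
theorem markov_batch_average_bound {𝒳 : Type*} [MeasurableSpace 𝒳] {d : ℕ}
    (P : Kernel 𝒳 𝒳) [IsMarkovKernel P] (μ : Measure 𝒳) [IsProbabilityMeasure μ]
    (hstat : μ.bind (fun s => P s) = μ)
    (κ ρ : ℝ) (hκ : 0 < κ) (hρ : ρ ∈ Set.Ioo (0 : ℝ) 1)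
    (hmix : ∀ (x : 𝒳) (k : ℕ) (A : Set 𝒳), MeasurableSet A →
      |((kpow P k x) A).toReal - (μ A).toReal| ≤ κ * ρ ^ k)
    (h : 𝒳 → EuclideanSpace ℝ (Fin d)) (C : ℝ) (hmeas : Measurable h)
    (hbd : ∀ x, ‖h x‖ ≤ C)
    {Ω : Type*} [MeasurableSpace Ω] (Pr : Measure Ω) [IsProbabilityMeasure Pr]
    (x : ℕ → Ω → 𝒳) (hx : ∀ i, Measurable (x i))
    (hMarkov : ∀ (i k : ℕ) (A B : Set 𝒳), MeasurableSet A → MeasurableSet B →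
      Pr {ω | x i ω ∈ A ∧ x (i + k) ω ∈ B} =
        ∫⁻ s in A, (kpow P k s) B ∂(Pr.map (x i)))
    (B : ℕ) (hB : 0 < B) :
    (∫ ω, ‖(B : ℝ)⁻¹ • ∑ i ∈ Finset.range B, h (x i ω) - ∫ s, h s ∂μ‖ ^ 2 ∂Pr ≤
        (1 / (B : ℝ) ^ 2) * (4 * B * C ^ 2 + 8 * C ^ 2 * κ * ρ * B / (1 - ρ))) ∧
      ∫ ω, ‖(B : ℝ)⁻¹ • ∑ i ∈ Finset.range B, h (x i ω) - ∫ s, h s ∂μ‖ ^ 2 ∂Pr ≤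
        8 * C ^ 2 * (1 + (κ - 1) * ρ) / ((1 - ρ) * B) :=
  markov_batch_average_bound_general P μ κ ρ hκ hρ hmix h C hmeas hbd Pr x hx hMarkov B hB
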